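/- arXiv:1912.10266 — 3 statements merged into one kernel-verified Lean document; each statement's English description precedes it below -/
import Mathlib

section
/- (Sufficiency implies that the induced statistical morphism is a monomorphism.) Let X and Y be measurable spaces, T : X → Y measurable, and M a set of probability measures on X. Suppose T is sufficient for M in the following sense: for every measurable set A ⊆ X there exists a measurable function h_A : Y → ℝ such that for every P ∈ M, the function h_A ∘ T is a version of the conditional expectation of the indicator of A given the σ-algebra generated by T, i.e. h_A ∘ T =ᵐ[P] P[Set.indicator A (fun _ => (1 : ℝ)) | MeasurableSpace.comap T]. Then the pushforward map is injective on M: for all P, Q ∈ M, Measure.map T P = Measure.map T Q implies P = Q. -/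
/-!
Conditional expectation preserves integrals, so `P(A) = ∫ h_A ∘ T dP = ∫ h_A d(T_*P)` for every
`P ∈ M`: the measure of each measurable set is determined by the pushforward `T_*P`.
-/

open MeasureTheory

theorem integral_map_eq_measureReal_of_comp_ae_eq_condExp_indicator
    {X Y : Type*} [MeasurableSpace X] [mY : MeasurableSpace Y]
    {T : X → Y} (hT : Measurable T) {μ : Measure X} [IsFiniteMeasure μ]
    {A : Set X} (hA : MeasurableSet A) {h : Y → ℝ} (hh : Measurable h)
    (hcond : h ∘ T =ᵐ[μ] μ[A.indicator (fun _ => (1 : ℝ)) | MeasurableSpace.comap T mY]) :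
    ∫ y, h y ∂(μ.map T) = μ.real A :=
  calc ∫ y, h y ∂(μ.map T)
      = ∫ x, h (T x) ∂μ := integral_map hT.aemeasurable hh.aestronglyMeasurable
    _ = ∫ x, (μ[A.indicator (fun _ => (1 : ℝ)) | MeasurableSpace.comap T mY]) x ∂μ :=
        integral_congr_ae hcond
    _ = ∫ x, A.indicator (fun _ => (1 : ℝ)) x ∂μ := integral_condExp hT.comap_le
    _ = μ.real A := integral_indicator_one hA

/-- Sufficiency implies the induced statistical morphism is a monomorphism: if for every
measurable `A ⊆ X` there is a measurable `h_A : Y → ℝ` such that for every `P ∈ M` the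
function `h_A ∘ T` is a version of the conditional expectation of the indicator of `A`
given `σ(T)`, then the pushforward map `P ↦ T_*P` is injective on `M`. -/
theorem sufficient_implies_pushforward_injective
    {X Y : Type*} [MeasurableSpace X] [MeasurableSpace Y]
    (T : X → Y) (hT : Measurable T)
    (M : Set (Measure X)) (hM : ∀ P ∈ M, IsProbabilityMeasure P)
    (hsuff : ∀ A : Set X, MeasurableSet A → ∃ h : Y → ℝ, Measurable h ∧
      ∀ P ∈ M, (h ∘ T) =ᵐ[P]
        P[A.indicator (fun _ => (1 : ℝ)) | MeasurableSpace.comap T ‹MeasurableSpace Y›]) :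
    ∀ P ∈ M, ∀ Q ∈ M, Measure.map T P = Measure.map T Q → P = Q := by
  intro P hP Q hQ hmap
  have := hM P hP
  have := hM Q hQ
  ext A hA
  obtain ⟨h, hh, hcond⟩ := hsuff A hA
  rw [← measureReal_eq_measureReal_iff,
    ← integral_map_eq_measureReal_of_comp_ae_eq_condExp_indicator hT hA hh (hcond P hP),
    ← integral_map_eq_measureReal_of_comp_ae_eq_condExp_indicator hT hA hh (hcond Q hQ), hmap]
end

section
/- (Theorem: a sufficient statistic whose pushforward exhausts the target model space induces a statistical isomorphism.) Let X and Y be measurable spaces, T : X → Y measurable, M a set of probability measures on X, and N a set of probability measures on Y with N = {Measure.map T P | P ∈ M}. Suppose T is sufficient for M: for every measurable set A ⊆ X there exists a measurable function h_A : Y → ℝ such that for every P ∈ M, h_A ∘ T =ᵐ[P] P[Set.indicator A (fun _ => (1 : ℝ)) | MeasurableSpace.comap T]. Then the pushforward map P ↦ Measure.map T P is a bijection from M onto N. -/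
open MeasureTheory

/-- A sufficient statistic whose pushforward exhausts the target model space induces a
statistical isomorphism: if `N = {T_*P | P ∈ M}` and `T` is sufficient for `M` (every
indicator admits a conditional-expectation version factoring through `T`, uniformly in
`P ∈ M`), then the pushforward map is a bijection from `M` onto `N`. -/
theorem sufficient_pushforward_bijOn
    {X Y : Type*} [MeasurableSpace X] [MeasurableSpace Y]
    (T : X → Y) (hT : Measurable T)
    (M : Set (Measure X)) (hM : ∀ P ∈ M, IsProbabilityMeasure P)
    (N : Set (Measure Y)) (hN : N = (fun P => Measure.map T P) '' M)
    (hsuff : ∀ A : Set X, MeasurableSet A → ∃ h : Y → ℝ, Measurable h ∧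
      ∀ P ∈ M, (h ∘ T) =ᵐ[P]
        P[A.indicator (fun _ => (1 : ℝ)) | MeasurableSpace.comap T ‹MeasurableSpace Y›]) :
    Set.BijOn (fun P => Measure.map T P) M N := by
  refine ⟨fun P hP => hN ▸ ⟨P, hP, rfl⟩, ?_, fun Q hQ => ?_⟩
  · -- InjOn
    intro P hP Q hQ hPQ
    have hPprob := hM P hP
    have hQprob := hM Q hQ
    have hle : MeasurableSpace.comap T ‹MeasurableSpace Y› ≤ ‹MeasurableSpace X› :=
      hT.comap_le
    -- key: for every measurable A, ∫ indicator dP = ∫ indicator dQ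
    have key : ∀ A : Set X, MeasurableSet A → P A = Q A := by
      intro A hA
      obtain ⟨h, hmeas, hcond⟩ := hsuff A hA
      have hintP : Integrable (A.indicator (fun _ => (1 : ℝ))) P :=
        (integrable_const 1).indicator hA
      have hintQ : Integrable (A.indicator (fun _ => (1 : ℝ))) Q :=
        (integrable_const 1).indicator hA
      have e1 : ∫ x, A.indicator (fun _ => (1 : ℝ)) x ∂P = ∫ y, h y ∂(Measure.map T P) := by
        rw [integral_map hT.aemeasurable hmeas.aestronglyMeasurable]
        calc ∫ x, A.indicator (fun _ => (1 : ℝ)) x ∂P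
            = ∫ x, (P[A.indicator (fun _ => (1 : ℝ)) | MeasurableSpace.comap T
                ‹MeasurableSpace Y›]) x ∂P := (integral_condExp hle).symm
          _ = ∫ x, (h ∘ T) x ∂P := integral_congr_ae (hcond P hP).symm
      have e2 : ∫ x, A.indicator (fun _ => (1 : ℝ)) x ∂Q = ∫ y, h y ∂(Measure.map T Q) := by
        rw [integral_map hT.aemeasurable hmeas.aestronglyMeasurable]
        calc ∫ x, A.indicator (fun _ => (1 : ℝ)) x ∂Q
            = ∫ x, (Q[A.indicator (fun _ => (1 : ℝ)) | MeasurableSpace.comap T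
                ‹MeasurableSpace Y›]) x ∂Q := (integral_condExp hle).symm
          _ = ∫ x, (h ∘ T) x ∂Q := integral_congr_ae (hcond Q hQ).symm
      have eint : ∫ x, A.indicator (fun _ => (1 : ℝ)) x ∂P
          = ∫ x, A.indicator (fun _ => (1 : ℝ)) x ∂Q := by
        rw [e1, e2, show Measure.map T P = Measure.map T Q from hPQ]
      rw [integral_indicator_const (1 : ℝ) hA, integral_indicator_const (1 : ℝ) hA,
        smul_eq_mul, smul_eq_mul, mul_one, mul_one] at eint
      have hPfin : P A ≠ ⊤ := (measure_lt_top P A).ne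
      have hQfin : Q A ≠ ⊤ := (measure_lt_top Q A).ne
      exact (ENNReal.toReal_eq_toReal_iff' hPfin hQfin).mp eint
    exact Measure.ext key
  · -- SurjOn
    rw [hN] at hQ
    obtain ⟨P, hP, rfl⟩ := hQ
    exact ⟨P, hP, rfl⟩
end

section
/- (L¹-continuity of the likelihood map: Lipschitz bound for product densities.) Let μ be a probability measure on a measurable space S, n a natural number, and f, g : S → ℝ measurable functions with f ≥ 0, g ≥ 0 and ∫ f dμ = 1 = ∫ g dμ. Then the product densities on the n-fold product space satisfy ∫ |∏_{i ∈ Fin n} f (x i) − ∏_{i ∈ Fin n} g (x i)| d(Measure.pi fun _ : Fin n => μ)(x) ≤ n * ∫ |f − g| dμ. -/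
open MeasureTheory

/-- Auxiliary: a product of copies of an integrable function is integrable w.r.t. the
product measure. -/
lemma aux_integrable_prod
    {S : Type*} [MeasurableSpace S] (μ : Measure S) [IsProbabilityMeasure μ]
    (n : ℕ) (f : S → ℝ) (hfi : Integrable f μ) :
    Integrable (fun x : Fin n → S => ∏ i : Fin n, f (x i))
      (Measure.pi fun _ : Fin n => μ) := by
  induction n with
  | zero =>
      simp only [Finset.univ_eq_empty, Finset.prod_empty]
      exact integrable_const 1
  | succ n ih =>
      have hmp := (MeasureTheory.measurePreserving_piFinSuccAbove
        (fun _ : Fin (n + 1) => μ) 0).symm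
      rw [← hmp.integrable_comp_emb (MeasurableEquiv.measurableEmbedding _)]
      have : ((MeasurableEquiv.piFinSuccAbove (fun _ : Fin (n+1) => S) 0).symm ∘
          fun p : S × (Fin n → S) => p) = fun p : S × (Fin n → S) => Fin.insertNth 0 p.1 p.2 := by
        ext p
        simp [MeasurableEquiv.piFinSuccAbove_symm_apply, Fin.insertNthEquiv]
      simp_rw [Function.comp_def, MeasurableEquiv.piFinSuccAbove_symm_apply,
        Fin.insertNthEquiv, Equiv.coe_fn_mk, Fin.insertNth_zero, Fin.prod_univ_succ,
        Fin.cons_zero, Fin.cons_succ]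
      exact Integrable.mul_prod hfi ih

lemma aux_integral_prod
    {S : Type*} [MeasurableSpace S] (μ : Measure S) [IsProbabilityMeasure μ]
    (n : ℕ) (f : S → ℝ) :
    ∫ y, (∏ i : Fin n, f (y i)) ∂(Measure.pi fun _ : Fin n => μ)
      = (∫ x, f x ∂μ) ^ n := by
  induction n with
  | zero => simp
  | succ n ih =>
      rw [← ((MeasureTheory.measurePreserving_piFinSuccAbove
        (fun _ : Fin (n + 1) => μ) 0).symm).integral_comp']
      have : ∫ p : S × (Fin n → S),
          (∏ i : Fin (n + 1),
            f ((MeasurableEquiv.piFinSuccAbove (fun _ : Fin (n+1) => S) 0).symm p i))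
          ∂(μ.prod (Measure.pi fun _ : Fin n => μ))
          = ∫ p : S × (Fin n → S), f p.1 * ∏ i : Fin n, f (p.2 i)
          ∂(μ.prod (Measure.pi fun _ : Fin n => μ)) := by
        congr 1
        ext p
        simp only [MeasurableEquiv.piFinSuccAbove_symm_apply, Fin.insertNthEquiv,
          Equiv.coe_fn_mk, Fin.insertNth_zero, Fin.prod_univ_succ, Fin.cons_zero, Fin.cons_succ,
          Fin.zero_succAbove, cast_eq]
      rw [this, integral_prod_mul f (fun y : Fin n → S => ∏ i : Fin n, f (y i)), ih, pow_succ]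
      ring

/-- L¹-continuity of the likelihood map: for probability densities `f` and `g` with respect
to `μ`, the L¹-distance of the induced product densities on the `n`-fold product space is
bounded by `n` times the L¹-distance of `f` and `g`. -/
theorem product_density_L1_lipschitz
    {S : Type*} [MeasurableSpace S] (μ : Measure S) [IsProbabilityMeasure μ]
    (n : ℕ) (f g : S → ℝ) (hf : Measurable f) (hg : Measurable g)
    (hf0 : ∀ x, 0 ≤ f x) (hg0 : ∀ x, 0 ≤ g x)
    (hf1 : ∫ x, f x ∂μ = 1) (hg1 : ∫ x, g x ∂μ = 1) :
    ∫ x, |(∏ i : Fin n, f (x i)) - (∏ i : Fin n, g (x i))|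
        ∂(Measure.pi fun _ : Fin n => μ)
      ≤ n * ∫ x, |f x - g x| ∂μ := by
  have hfi : Integrable f μ := by
    by_contra h; rw [integral_undef h] at hf1; norm_num at hf1
  have hgi : Integrable g μ := by
    by_contra h; rw [integral_undef h] at hg1; norm_num at hg1
  have habs : Integrable (fun x => |f x - g x|) μ := (hfi.sub hgi).abs
  have habsnn : 0 ≤ ∫ x, |f x - g x| ∂μ :=
    integral_nonneg fun x => abs_nonneg _
  induction n with
  | zero => simp
  | succ n ih =>
      set ν := Measure.pi (fun _ : Fin n => μ) with hν
      -- integrability facts on ν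
      have hPf : Integrable (fun y : Fin n → S => ∏ i, f (y i)) ν :=
        aux_integrable_prod μ n f hfi
      have hPg : Integrable (fun y : Fin n → S => ∏ i, g (y i)) ν :=
        aux_integrable_prod μ n g hgi
      have hPabs : Integrable (fun y : Fin n → S => |(∏ i, f (y i)) - ∏ i, g (y i)|) ν :=
        (hPf.sub hPg).abs
      -- rewrite LHS via the measurable equiv
      have hmp := (MeasureTheory.measurePreserving_piFinSuccAbove
        (fun _ : Fin (n + 1) => μ) 0).symm
      have hrw : ∫ x, |(∏ i : Fin (n+1), f (x i)) - ∏ i : Fin (n+1), g (x i)|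
            ∂(Measure.pi fun _ : Fin (n+1) => μ)
          = ∫ p : S × (Fin n → S),
              |f p.1 * (∏ i : Fin n, f (p.2 i)) - g p.1 * ∏ i : Fin n, g (p.2 i)|
            ∂(μ.prod ν) := by
        rw [← hmp.integral_comp']
        congr 1
        ext p
        simp only [MeasurableEquiv.piFinSuccAbove_symm_apply, Fin.insertNthEquiv,
          Equiv.coe_fn_mk, Fin.insertNth_zero, Fin.prod_univ_succ, Fin.cons_zero, Fin.cons_succ,
          Fin.zero_succAbove, cast_eq]
      rw [hrw]
      -- pointwise bound
      have hpt : ∀ p : S × (Fin n → S),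
          |f p.1 * (∏ i : Fin n, f (p.2 i)) - g p.1 * ∏ i : Fin n, g (p.2 i)|
            ≤ f p.1 * |(∏ i : Fin n, f (p.2 i)) - ∏ i : Fin n, g (p.2 i)|
              + (∏ i : Fin n, g (p.2 i)) * |f p.1 - g p.1| := by
        intro ⟨a, y⟩
        have h1 : f a * (∏ i : Fin n, f (y i)) - g a * ∏ i : Fin n, g (y i)
            = f a * ((∏ i : Fin n, f (y i)) - ∏ i : Fin n, g (y i))
              + (∏ i : Fin n, g (y i)) * (f a - g a) := by ring
        rw [h1]
        refine (abs_add_le _ _).trans ?_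
        rw [abs_mul, abs_mul, abs_of_nonneg (hf0 a),
          abs_of_nonneg (Finset.prod_nonneg fun i _ => hg0 (y i))]
      -- RHS integrable
      have hRHS : Integrable (fun p : S × (Fin n → S) =>
          f p.1 * |(∏ i : Fin n, f (p.2 i)) - ∏ i : Fin n, g (p.2 i)|
            + (∏ i : Fin n, g (p.2 i)) * |f p.1 - g p.1|) (μ.prod ν) := by
        refine Integrable.add (Integrable.mul_prod hfi hPabs) ?_
        have := Integrable.mul_prod habs hPg
        -- this : Integrable fun p => |f p.1 - g p.1| * ∏ i, g (p.2 i)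
        exact this.congr (Filter.Eventually.of_forall fun p => mul_comm _ _)
      calc ∫ p : S × (Fin n → S),
              |f p.1 * (∏ i : Fin n, f (p.2 i)) - g p.1 * ∏ i : Fin n, g (p.2 i)| ∂(μ.prod ν)
          ≤ ∫ p : S × (Fin n → S),
              (f p.1 * |(∏ i : Fin n, f (p.2 i)) - ∏ i : Fin n, g (p.2 i)|
                + (∏ i : Fin n, g (p.2 i)) * |f p.1 - g p.1|) ∂(μ.prod ν) := by
            refine integral_mono_of_nonneg (Filter.Eventually.of_forall fun p => abs_nonneg _)
              hRHS (Filter.Eventually.of_forall hpt)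
        _ = (∫ a, f a ∂μ) * (∫ y, |(∏ i : Fin n, f (y i)) - ∏ i : Fin n, g (y i)| ∂ν)
              + (∫ y, (∏ i : Fin n, g (y i)) ∂ν) * (∫ a, |f a - g a| ∂μ) := by
            rw [integral_add (Integrable.mul_prod hfi hPabs)]
            · rw [integral_prod_mul f (fun y : Fin n → S => |(∏ i : Fin n, f (y i)) - ∏ i : Fin n, g (y i)|)]
              congr 1
              have h2 : ∫ p : S × (Fin n → S),
                  (∏ i : Fin n, g (p.2 i)) * |f p.1 - g p.1| ∂(μ.prod ν)
                  = ∫ p : S × (Fin n → S), |f p.1 - g p.1| * ∏ i : Fin n, g (p.2 i)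
                    ∂(μ.prod ν) := by
                congr 1; ext p; ring
              rw [h2, integral_prod_mul (fun a => |f a - g a|) (fun y : Fin n → S => ∏ i : Fin n, g (y i)), mul_comm]
            · exact ((Integrable.mul_prod habs hPg).congr
                (Filter.Eventually.of_forall fun p => mul_comm _ _))
        _ ≤ n * ∫ x, |f x - g x| ∂μ + 1 * ∫ a, |f a - g a| ∂μ := by
            have hPg1 : ∫ y, (∏ i : Fin n, g (y i)) ∂ν = 1 := by
              rw [hν, aux_integral_prod μ n g, hg1, one_pow]
            rw [hf1, one_mul, hPg1]
            exact add_le_add ih le_rfl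
        _ = (↑(n + 1)) * ∫ x, |f x - g x| ∂μ := by push_cast; ring
end
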